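/- Conversely, given an injective function P : G → C with P(g₁) ∈ D(P(g₂)) for every (g₁,g₂) ∈ E, the Boolean assignment p g c := (P g = c) satisfies all four SAT constraints: at-most-one cell per gate, at-least-one cell per gate, at-most-one gate per cell, and the connectivity-domain clauses. -/

import Mathlib

theorem placement_satisfies_sat_constraints_general {G C : Type*}
    [DecidableEq C]
    (E : Set (G × G)) (D : C → Finset C) (P : G → C)
    (hinj : Function.Injective P)
    (hE : ∀ g₁ g₂ : G, (g₁, g₂) ∈ E → P g₁ ∈ D (P g₂)) :
    -- at most one cell per gate
    (∀ (g : G) (c₁ c₂ : C), c₁ ≠ c₂ →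
        ¬(decide (P g = c₁) = true ∧ decide (P g = c₂) = true)) ∧
    -- at least one cell per gate
    (∀ g : G, ∃ c : C, decide (P g = c) = true) ∧
    -- at most one gate per cell
    (∀ (c : C) (g₁ g₂ : G), g₁ ≠ g₂ →
        ¬(decide (P g₁ = c) = true ∧ decide (P g₂ = c) = true)) ∧
    -- connectivity-domain clauses
    (∀ g₁ g₂ : G, (g₁, g₂) ∈ E → ∀ c₂ : C, decide (P g₂ = c₂) = true →
        ∃ c₁ ∈ D c₂, decide (P g₁ = c₁) = true) := by
  simp only [decide_eq_true_eq]
  refine ⟨fun g c₁ c₂ hne h => hne (h.1.symm.trans h.2), fun g => ⟨P g, rfl⟩,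
    fun c g₁ g₂ hne h => hne (hinj (h.1.trans h.2.symm)), ?_⟩
  rintro g₁ g₂ hg _ rfl
  exact ⟨P g₁, hE g₁ g₂ hg, rfl⟩

theorem placement_satisfies_sat_constraints {G C : Type*} [Fintype G] [Fintype C]
    [DecidableEq C]
    (E : Set (G × G)) (D : C → Finset C) (P : G → C)
    (hinj : Function.Injective P)
    (hE : ∀ g₁ g₂ : G, (g₁, g₂) ∈ E → P g₁ ∈ D (P g₂)) :
    -- at most one cell per gate
    (∀ (g : G) (c₁ c₂ : C), c₁ ≠ c₂ →
        ¬(decide (P g = c₁) = true ∧ decide (P g = c₂) = true)) ∧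
    -- at least one cell per gate
    (∀ g : G, ∃ c : C, decide (P g = c) = true) ∧
    -- at most one gate per cell
    (∀ (c : C) (g₁ g₂ : G), g₁ ≠ g₂ →
        ¬(decide (P g₁ = c) = true ∧ decide (P g₂ = c) = true)) ∧
    -- connectivity-domain clauses
    (∀ g₁ g₂ : G, (g₁, g₂) ∈ E → ∀ c₂ : C, decide (P g₂ = c₂) = true →
        ∃ c₁ ∈ D c₂, decide (P g₁ = c₁) = true) :=
  placement_satisfies_sat_constraints_general E D P hinj hE
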